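/- Let n ≥ 1 and let μ_1, …, μ_n be real numbers with −1 < μ_k < 1 for every k. Fix a > −1/2, set μ_{k,a} = μ_k + a(1+μ_k), A_a(x) = −∫_{−1/(1+2a)}^{x} s·∏_{k=1}^{n}(1 + μ_{k,a}·s) ds, and assume A_a(1) = 0. Define B_a(x) = ∫_{0}^{x} (∏_{k=1}^{n}(1 + μ_{k,a}·s))/A_a(s) ds. Then B_a(x) → +∞ as x → 1 from the left, and B_a(x) → −∞ as x → −1/(1+2a) from the right; consequently B_a maps the open interval (−1/(1+2a), 1) bijectively onto ℝ. -/

import Mathlib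

open Real MeasureTheory Filter Set
open scoped Topology

/-- `A_a(x) = -∫_{-1/(1+2a)}^{x} s ∏ₖ (1 + μ_{k,a} s) ds`. -/
noncomputable def sasakiA {n : ℕ} (μ : Fin n → ℝ) (a x : ℝ) : ℝ :=
  -∫ s in (-1/(1+2*a))..x, s * ∏ k, (1 + (μ k + a * (1 + μ k)) * s)

/-- `B_a(x) = ∫₀ˣ (∏ₖ (1 + μ_{k,a} s)) / A_a(s) ds`. -/
noncomputable def sasakiB {n : ℕ} (μ : Fin n → ℝ) (a x : ℝ) : ℝ :=
  ∫ s in (0:ℝ)..x, (∏ k, (1 + (μ k + a * (1 + μ k)) * s)) / sasakiA μ a s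

theorem B_bijects_onto_real_line (n : ℕ) (hn : 1 ≤ n) (μ : Fin n → ℝ)
    (hμ : ∀ k, -1 < μ k ∧ μ k < 1) (a : ℝ) (ha : -1/2 < a)
    (hA1 : sasakiA μ a 1 = 0) :
    Tendsto (sasakiB μ a) (nhdsWithin 1 (Set.Iio 1)) atTop ∧
    Tendsto (sasakiB μ a) (nhdsWithin (-1/(1+2*a)) (Set.Ioi (-1/(1+2*a)))) atBot ∧
    Set.BijOn (sasakiB μ a) (Set.Ioo (-1/(1+2*a)) (1 : ℝ)) Set.univ := by
  have h2a : (0:ℝ) < 1 + 2*a := by linarith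
  set L : ℝ := -1/(1+2*a) with hLdef
  have hL0 : L < 0 := by
    rw [hLdef]; exact div_neg_of_neg_of_pos (by norm_num) h2a
  have hL1 : L < 1 := hL0.trans one_pos
  set P : ℝ → ℝ := fun s => ∏ k, (1 + (μ k + a * (1 + μ k)) * s) with hPdef
  set A : ℝ → ℝ := sasakiA μ a with hAdef
  set B : ℝ → ℝ := sasakiB μ a with hBdef
  -- positivity of P on [L, 1]
  have hPpos : ∀ s ∈ Icc L 1, 0 < P s := by
    intro s hs
    refine Finset.prod_pos fun k _ => ?_
    have hk1 := (hμ k).1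
    have hk2 := (hμ k).2
    have hsL : L ≤ s := hs.1
    have hs1 : s ≤ 1 := hs.2
    have hLmul : L * (1 + 2*a) = -1 := by
      rw [hLdef]; field_simp
    have hsmul : -1 ≤ s * (1 + 2*a) := by
      rw [← hLmul]; exact mul_le_mul_of_nonneg_right hsL h2a.le
    rcases le_or_gt 0 (μ k + a * (1 + μ k)) with hc | hc
    · nlinarith
    · nlinarith
  have hPcont : Continuous P := by
    apply continuous_finset_prod
    intro k _
    fun_prop
  have hfcont : Continuous (fun s => s * P s) := continuous_id.mul hPcont
  -- A has derivative -(x * P x)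
  have hAderiv : ∀ x : ℝ, HasDerivAt A (-(x * P x)) x := by
    intro x
    have h := intervalIntegral.integral_hasDerivAt_right
      ((hfcont.intervalIntegrable L x))
      (hfcont.stronglyMeasurableAtFilter volume (nhds x))
      hfcont.continuousAt
    exact h.neg
  have hAcont : Continuous A :=
    continuous_iff_continuousAt.2 fun x => (hAderiv x).continuousAt
  -- A x = ∫_x^1 f
  have hAalt : ∀ x : ℝ, A x = ∫ s in x..(1:ℝ), s * P s := by
    intro x
    have hadd := intervalIntegral.integral_add_adjacent_intervals (μ := volume)
      (hfcont.intervalIntegrable L x) (hfcont.intervalIntegrable x 1)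
    have h1 : -∫ s in L..(1:ℝ), s * P s = 0 := hA1
    have : A x = -∫ s in L..x, s * P s := rfl
    rw [this]; linarith [hadd]
  have hAL : A L = 0 := by
    have : A L = -∫ s in L..L, s * P s := rfl
    simp [this]
  -- positivity of A on (L, 1)
  have hApos : ∀ x ∈ Ioo L 1, 0 < A x := by
    intro x hx
    rcases le_or_gt 0 x with h0 | h0
    · rw [hAalt x]
      apply intervalIntegral.intervalIntegral_pos_of_pos_on
        (hfcont.intervalIntegrable x 1)
      · intro s hs
        have hsP := hPpos s ⟨(hL0.trans_le (h0.trans hs.1.le)).le, hs.2.le⟩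
        have : 0 < s := lt_of_le_of_lt h0 hs.1
        positivity
      · exact hx.2
    · have : A x = ∫ s in L..x, -(s * P s) := by
        have : A x = -∫ s in L..x, s * P s := rfl
        rw [this, intervalIntegral.integral_neg]
      rw [this]
      apply intervalIntegral.intervalIntegral_pos_of_pos_on
        ((hfcont.neg).intervalIntegrable L x)
      · intro s hs
        have hsP := hPpos s ⟨hs.1.le, (hs.2.trans h0).le.trans one_pos.le⟩
        have hs0 : s < 0 := hs.2.trans h0
        have : s * P s < 0 := mul_neg_of_neg_of_pos hs0 hsP
        show 0 < -(s * P s)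
        linarith
      · exact hx.1
  -- the integrand g
  set g : ℝ → ℝ := fun s => P s / A s with hgdef
  have hgcontOn : ContinuousOn g (Ioo L 1) :=
    hPcont.continuousOn.div hAcont.continuousOn (fun x hx => (hApos x hx).ne')
  have hsub : ∀ {u v : ℝ}, u ∈ Ioo L 1 → v ∈ Ioo L 1 → uIcc u v ⊆ Ioo L 1 :=
    fun hu hv => (Set.ordConnected_Ioo).uIcc_subset hu hv
  have hgInt : ∀ {u v : ℝ}, u ∈ Ioo L 1 → v ∈ Ioo L 1 →
      IntervalIntegrable g volume u v := by
    intro u v hu hv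
    exact (hgcontOn.mono (hsub hu hv)).intervalIntegrable
  have h0mem : (0:ℝ) ∈ Ioo L 1 := ⟨hL0, one_pos⟩
  have hsgInt : ∀ {u v : ℝ}, u ∈ Ioo L 1 → v ∈ Ioo L 1 →
      IntervalIntegrable (fun s => s * g s) volume u v := by
    intro u v hu hv
    exact ((continuousOn_id.mul hgcontOn).mono (hsub hu hv)).intervalIntegrable
  -- key identity: ∫_c^x s g s = log A c - log A x
  have hlogA : ∀ {c x : ℝ}, c ∈ Ioo L 1 → x ∈ Ioo L 1 →
      (∫ s in c..x, s * g s) = Real.log (A c) - Real.log (A x) := by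
    intro c x hc hx
    have hd : ∀ t ∈ uIcc c x, HasDerivAt (fun t => -Real.log (A t)) (t * g t) t := by
      intro t ht
      have htm := hsub hc hx ht
      have hAt := hApos t htm
      have := ((hAderiv t).log hAt.ne').neg
      refine this.congr_deriv ?_
      rw [hgdef]
      field_simp
    have := intervalIntegral.integral_eq_sub_of_hasDerivAt hd (hsgInt hc hx)
    rw [this]; ring
  -- lower bound near 1
  have hbound1 : ∀ x ∈ Ico (0:ℝ) 1, Real.log (A 0) - Real.log (A x) ≤ B x := by
    intro x hx
    have hxm : x ∈ Ioo L 1 := ⟨hL0.trans_le hx.1, hx.2⟩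
    have hB : B x = ∫ s in (0:ℝ)..x, g s := rfl
    rw [hB, ← hlogA h0mem hxm]
    apply intervalIntegral.integral_mono_on hx.1 (hsgInt h0mem hxm) (hgInt h0mem hxm)
    intro s hs
    have hsm : s ∈ Ioo L 1 := ⟨hL0.trans_le hs.1, lt_of_le_of_lt hs.2 hx.2⟩
    have hg0 : 0 ≤ g s := le_of_lt (div_pos (hPpos s ⟨hsm.1.le, hsm.2.le⟩) (hApos s hsm))
    nlinarith [hs.1, hsm.2]
  -- upper bound near L
  have hbound2 : ∀ x ∈ Ioc L (0:ℝ),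
      B x ≤ (-L)⁻¹ * (Real.log (A x) - Real.log (A 0)) := by
    intro x hx
    have hxm : x ∈ Ioo L 1 := ⟨hx.1, lt_of_le_of_lt hx.2 one_pos⟩
    have hB : B x = -∫ s in x..(0:ℝ), g s := by
      rw [hBdef]
      have : sasakiB μ a x = ∫ s in (0:ℝ)..x, g s := rfl
      rw [this, intervalIntegral.integral_symm]
    rw [hB]
    have key : (-L)⁻¹ * (Real.log (A 0) - Real.log (A x)) ≤ ∫ s in x..(0:ℝ), g s := by
      have hid : (∫ s in x..(0:ℝ), (-L)⁻¹ * (-(s * g s)))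
          = (-L)⁻¹ * (Real.log (A 0) - Real.log (A x)) := by
        rw [intervalIntegral.integral_const_mul, intervalIntegral.integral_neg,
          hlogA hxm h0mem]
        ring
      rw [← hid]
      apply intervalIntegral.integral_mono_on hx.2
        ((((hsgInt hxm h0mem).neg).const_mul _))
        (hgInt hxm h0mem)
      intro s hs
      have hsm : s ∈ Ioo L 1 := ⟨lt_of_lt_of_le hx.1 hs.1, lt_of_le_of_lt hs.2 one_pos⟩
      have hg0 : 0 ≤ g s := le_of_lt (div_pos (hPpos s ⟨hsm.1.le, hsm.2.le⟩) (hApos s hsm))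
      have hLpos : 0 < -L := neg_pos.2 hL0
      have h1 : (-s) * (-L)⁻¹ ≤ 1 := by
        rw [mul_inv_le_iff₀ hLpos, one_mul]
        linarith [hsm.1]
      have h3 : (-s) * (-L)⁻¹ * g s ≤ 1 * g s := mul_le_mul_of_nonneg_right h1 hg0
      have h4 : (-L)⁻¹ * -(s * g s) ≤ g s := by nlinarith [h3]
      exact h4
    linarith
  -- tendsto of log A
  have hlog1 : Tendsto (fun x => Real.log (A x)) (𝓝[<] (1:ℝ)) atBot := by
    apply Real.tendsto_log_nhdsGT_zero.comp
    rw [tendsto_nhdsWithin_iff]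
    constructor
    · have := (hAcont.tendsto 1).mono_left (nhdsWithin_le_nhds (s := Iio (1:ℝ)))
      rwa [show A 1 = 0 from hA1] at this
    · filter_upwards [Ioo_mem_nhdsLT_of_mem (show (1:ℝ) ∈ Ioc L 1 from ⟨hL1, le_refl _⟩)]
        with x hx
      exact hApos x hx
  have hlogL : Tendsto (fun x => Real.log (A x)) (𝓝[>] L) atBot := by
    apply Real.tendsto_log_nhdsGT_zero.comp
    rw [tendsto_nhdsWithin_iff]
    constructor
    · have := (hAcont.tendsto L).mono_left (nhdsWithin_le_nhds (s := Ioi L))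
      rwa [hAL] at this
    · filter_upwards [Ioo_mem_nhdsGT_of_mem (show L ∈ Ico L 1 from ⟨le_refl _, hL1⟩)]
        with x hx
      exact hApos x hx
  -- tendsto of B at 1
  have hB1 : Tendsto B (𝓝[<] (1:ℝ)) atTop := by
    have hlim : Tendsto (fun x => Real.log (A 0) - Real.log (A x)) (𝓝[<] (1:ℝ)) atTop := by
      have h1 : Tendsto (fun x => -Real.log (A x)) (𝓝[<] (1:ℝ)) atTop :=
        tendsto_neg_atBot_atTop.comp hlog1
      have := tendsto_atTop_add_const_left _ (Real.log (A 0)) h1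
      simpa [sub_eq_add_neg] using this
    apply tendsto_atTop_mono' _ _ hlim
    filter_upwards [Ioo_mem_nhdsLT_of_mem (show (1:ℝ) ∈ Ioc 0 1 from ⟨one_pos, le_refl _⟩)]
      with x hx
    exact hbound1 x ⟨hx.1.le, hx.2⟩
  -- tendsto of B at L
  have hBL : Tendsto B (𝓝[>] L) atBot := by
    have hLpos : (0:ℝ) < (-L)⁻¹ := inv_pos.2 (neg_pos.2 hL0)
    have hlim : Tendsto (fun x => (-L)⁻¹ * (Real.log (A x) - Real.log (A 0)))
        (𝓝[>] L) atBot := by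
      have h1 : Tendsto (fun x => Real.log (A x) - Real.log (A 0)) (𝓝[>] L) atBot :=
        tendsto_atBot_add_const_right _ (-(Real.log (A 0))) hlogL |>.congr
          (fun x => by ring)
      exact h1.const_mul_atBot hLpos
    apply tendsto_atBot_mono' _ _ hlim
    filter_upwards [Ioo_mem_nhdsGT_of_mem (show L ∈ Ico L 0 from ⟨le_refl _, hL0⟩)]
      with x hx
    exact hbound2 x ⟨hx.1, hx.2.le⟩
  -- strict monotonicity of B
  have hBmono : StrictMonoOn B (Ioo L 1) := by
    intro x hx y hy hxy
    have hadd := intervalIntegral.integral_add_adjacent_intervals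
      (hgInt h0mem hx) (hgInt hx hy)
    have hpos : 0 < ∫ s in x..y, g s := by
      apply intervalIntegral.intervalIntegral_pos_of_pos_on (hgInt hx hy) _ hxy
      intro s hs
      have hsm : s ∈ Ioo L 1 := ⟨hx.1.trans hs.1, hs.2.trans hy.2⟩
      exact div_pos (hPpos s ⟨hsm.1.le, hsm.2.le⟩) (hApos s hsm)
    have hBx : B x = ∫ s in (0:ℝ)..x, g s := rfl
    have hBy : B y = ∫ s in (0:ℝ)..y, g s := rfl
    rw [hBx, hBy, ← hadd]
    linarith
  -- continuity of B on Ioo L 1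
  have hBderiv : ∀ x ∈ Ioo L 1, HasDerivAt B (g x) x := by
    intro x hx
    have hopen : IsOpen (Ioo L 1) := isOpen_Ioo
    exact intervalIntegral.integral_hasDerivAt_right (hgInt h0mem hx)
      (hgcontOn.stronglyMeasurableAtFilter hopen x hx)
      ((hgcontOn.continuousAt (hopen.mem_nhds hx)))
  have hBcont : ContinuousOn B (Ioo L 1) := fun x hx =>
    ((hBderiv x hx).continuousAt).continuousWithinAt
  refine ⟨hB1, hBL, ?_, ?_, ?_⟩
  · exact fun x _ => mem_univ _
  · exact hBmono.injOn
  · intro y _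
    have hne1 : (𝓝[<] (1:ℝ)).NeBot := nhdsLT_neBot 1
    have hneL : (𝓝[>] L).NeBot := nhdsGT_neBot L
    obtain ⟨x₂, hx₂m, hx₂⟩ : ∃ x, x ∈ Ioo L 1 ∧ y < B x := by
      have h1 : ∀ᶠ x in 𝓝[<] (1:ℝ), y < B x := hB1.eventually_gt_atTop y
      have h2 : ∀ᶠ x in 𝓝[<] (1:ℝ), x ∈ Ioo L 1 :=
        Ioo_mem_nhdsLT_of_mem (show (1:ℝ) ∈ Ioc L 1 from ⟨hL1, le_refl _⟩)
      exact (h2.and h1).exists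
    obtain ⟨x₁, hx₁m, hx₁⟩ : ∃ x, x ∈ Ioo L 1 ∧ B x < y := by
      have h1 : ∀ᶠ x in 𝓝[>] L, B x < y := hBL.eventually_lt_atBot y
      have h2 : ∀ᶠ x in 𝓝[>] L, x ∈ Ioo L 1 :=
        Ioo_mem_nhdsGT_of_mem (show L ∈ Ico L 1 from ⟨le_refl _, hL1⟩)
      exact (h2.and h1).exists
    have hx12 : x₁ < x₂ := by
      by_contra h
      push_neg at h
      rcases eq_or_lt_of_le h with h | h
      · rw [h] at hx₂; linarith
      · have := hBmono hx₂m hx₁m h; linarith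
    have hIcc : Icc x₁ x₂ ⊆ Ioo L 1 := fun t ht =>
      ⟨hx₁m.1.trans_le ht.1, lt_of_le_of_lt ht.2 hx₂m.2⟩
    have := intermediate_value_Ioo hx12.le (hBcont.mono hIcc)
    have hy : y ∈ Ioo (B x₁) (B x₂) := ⟨hx₁, hx₂⟩
    obtain ⟨t, ht, hty⟩ := this hy
    exact ⟨t, ⟨hx₁m.1.trans ht.1, ht.2.trans hx₂m.2⟩, hty⟩
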